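/- Suppose x_{m+1} = A_m x_m admits a general dichotomy with bounds (a_{m,n}) and (b_{m,n}), the f_m are Lipschitz with f_m(0)=0, α < +∞, β < +∞, and 2α + max{2β, √β} < 1. Define the operator Φ on 𝒳 by (Φφ)_n(ξ) = − Σ_{k=n}^{∞} (𝒜_{k+1,n}|_{F_n})^{−1} Q_{k+1} f_k(x^φ_{n,k}(ξ) + φ_k(x^φ_{n,k}(ξ))). Then for every φ ∈ 𝒳, every n ∈ ℕ and all ξ, ξ̄ ∈ E_n one has (Φφ)_n(0) = 0 and ‖(Φφ)_n(ξ) − (Φφ)_n(ξ̄)‖ ≤ (2β/(1 − 2α)) ‖ξ − ξ̄‖ ≤ ‖ξ − ξ̄‖; in particular Φ maps 𝒳 into 𝒳. -/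

import Mathlib

/-- `calA A m n` is the linear evolution operator
`𝒜_{m,n} = A_{m-1} ∘ ⋯ ∘ A_n` (and the identity if `m ≤ n`). -/
def calA {X : Type*} [NormedAddCommGroup X] [NormedSpace ℝ X]
    (A : ℕ → X →L[ℝ] X) : ℕ → ℕ → X →L[ℝ] X
  | 0, _ => ContinuousLinearMap.id ℝ X
  | m + 1, n => if m + 1 ≤ n then ContinuousLinearMap.id ℝ X else (A m).comp (calA A m n)

/-!
For fixed `n, ξ, ξ'` the weighted distance `S = sup_{m ≥ n} ‖x_m(ξ) - x_m(ξ')‖ / a_{m,n}` is finite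
because `x^φ_n ∈ ℬ_n`. Inserting the bound `S a_{k,n}` into the variation of constants formula, and
using that `y ↦ y + φ_k y` is `2`-Lipschitz, gives `S ≤ ‖ξ - ξ'‖ + 2αS`, i.e.
`(1 - 2α) S ≤ ‖ξ - ξ'‖`. Each term of the series defining `(Φφ)_n` then moves by at most
`2 S b_{k+1,n} a_{k,n} Lip(f_k)`, so `Φφ` is `2β / (1 - 2α)`-Lipschitz, a constant at most `1`
since `2α + 2β < 1`.
-/

open Finset

theorem exists_le_mul_of_le_add_mul {ι : Type*} {s : Set ι} (hs : s.Nonempty) {u w : ι → ℝ}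
    {c d : ℝ} (hu : ∀ i ∈ s, 0 ≤ u i) (hw : ∀ i ∈ s, 0 < w i)
    (hbdd : ∃ C, ∀ i ∈ s, u i ≤ C * w i)
    (hself : ∀ S, 0 ≤ S → (∀ i ∈ s, u i ≤ S * w i) → ∀ i ∈ s, u i ≤ (d + c * S) * w i) :
    ∃ S, 0 ≤ S ∧ S * (1 - c) ≤ d ∧ ∀ i ∈ s, u i ≤ S * w i := by
  set R := (fun i => u i / w i) '' s
  have hR : BddAbove R := by
    obtain ⟨C, hC⟩ := hbdd
    exact ⟨C, Set.forall_mem_image.2 fun i hi => (div_le_iff₀ (hw i hi)).2 (hC i hi)⟩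
  have hle : ∀ i ∈ s, u i ≤ sSup R * w i := fun i hi =>
    (div_le_iff₀ (hw i hi)).1 (le_csSup hR (Set.mem_image_of_mem _ hi))
  obtain ⟨i₀, hi₀⟩ := hs
  have hS0 : 0 ≤ sSup R :=
    (div_nonneg (hu i₀ hi₀) (hw i₀ hi₀).le).trans (le_csSup hR (Set.mem_image_of_mem _ hi₀))
  have hself' : sSup R ≤ d + c * sSup R :=
    csSup_le (Set.Nonempty.image _ ⟨i₀, hi₀⟩) <| Set.forall_mem_image.2 fun i hi =>
      (div_le_iff₀ (hw i hi)).2 (hself _ hS0 hle i hi)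
  exact ⟨sSup R, hS0, by linarith, hle⟩

theorem norm_map_add_sub_map_add_le {E F : Type*} [SeminormedAddCommGroup E]
    [SeminormedAddCommGroup F] {g : E → F} {L : ℝ} (hL : 0 ≤ L)
    (hg : ∀ u v, ‖g u - g v‖ ≤ L * ‖u - v‖) {y y' z z' : E} (hz : ‖z - z'‖ ≤ ‖y - y'‖) :
    ‖g (y + z) - g (y' + z')‖ ≤ 2 * L * ‖y - y'‖ :=
  calc ‖g (y + z) - g (y' + z')‖ ≤ L * ‖(y - y') + (z - z')‖ :=
        (hg _ _).trans_eq (by rw [add_sub_add_comm])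
    _ ≤ L * (‖y - y'‖ + ‖y - y'‖) := by gcongr; exact (norm_add_le _ _).trans (by gcongr)
    _ = 2 * L * ‖y - y'‖ := by ring

theorem sum_le_mul_of_isLUB {a : ℕ → ℕ → ℝ} {L : ℕ → ℝ} {α : ℝ}
    (ha : ∀ m n : ℕ, n ≤ m → 0 < a m n) (hL : ∀ k, 0 ≤ L k)
    (hα : IsLUB {r : ℝ | ∃ m n : ℕ, n < m ∧
      r = (∑ k ∈ Ico n m, a m (k + 1) * (a k n * L k)) / a m n} α)
    {m n : ℕ} (hnm : n ≤ m) :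
    ∑ k ∈ Ico n m, a m (k + 1) * (a k n * L k) ≤ α * a m n := by
  rcases hnm.eq_or_lt with rfl | hlt
  · have hα0 : 0 ≤ α := by
      refine le_trans ?_ (hα.1 ⟨1, 0, Nat.zero_lt_one, rfl⟩)
      exact div_nonneg (sum_nonneg fun k hk => by
        have := mem_Ico.1 hk
        exact mul_nonneg (ha _ _ (by omega)).le (mul_nonneg (ha _ _ (by omega)).le (hL k)))
        (ha _ _ zero_le_one).le
    simpa using mul_nonneg hα0 (ha n n le_rfl).le
  · exact (div_le_iff₀ (ha m n hnm)).1 (hα.1 ⟨m, n, hlt, rfl⟩)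

section VariationOfConstants

variable {X : Type*} [NormedAddCommGroup X] [NormedSpace ℝ X] {A P : ℕ → X →L[ℝ] X}
  {a : ℕ → ℕ → ℝ}

theorem norm_calA_sub_add_sum_sub_le
    (hD1 : ∀ m n : ℕ, n ≤ m → ‖(calA A m n).comp (P n)‖ ≤ a m n) {m n : ℕ} (hnm : n ≤ m)
    {w w' : X} (hw : P n w = w) (hw' : P n w' = w') {g g' : ℕ → X} {K : ℕ → ℝ} {S : ℝ}
    (hg : ∀ k ∈ Ico n m, ‖g k - g' k‖ ≤ S * (a k n * K k)) :
    ‖(calA A m n w + ∑ k ∈ Ico n m, calA A m (k + 1) (P (k + 1) (g k))) -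
        (calA A m n w' + ∑ k ∈ Ico n m, calA A m (k + 1) (P (k + 1) (g' k)))‖ ≤
      a m n * ‖w - w'‖ + S * ∑ k ∈ Ico n m, a m (k + 1) * (a k n * K k) := by
  have hsplit : (calA A m n w + ∑ k ∈ Ico n m, calA A m (k + 1) (P (k + 1) (g k))) -
      (calA A m n w' + ∑ k ∈ Ico n m, calA A m (k + 1) (P (k + 1) (g' k))) =
      (calA A m n).comp (P n) (w - w') +
        ∑ k ∈ Ico n m, (calA A m (k + 1)).comp (P (k + 1)) (g k - g' k) := by
    simp only [ContinuousLinearMap.comp_apply, map_sub, hw, hw', sum_sub_distrib]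
    abel
  rw [hsplit, mul_sum]
  refine (norm_add_le _ _).trans (add_le_add (ContinuousLinearMap.le_of_opNorm_le _
    (hD1 m n hnm) _) ((norm_sum_le _ _).trans (sum_le_sum fun k hk => ?_)))
  have hkm : k + 1 ≤ m := (mem_Ico.1 hk).2
  calc ‖(calA A m (k + 1)).comp (P (k + 1)) (g k - g' k)‖ ≤ a m (k + 1) * ‖g k - g' k‖ :=
        ContinuousLinearMap.le_of_opNorm_le _ (hD1 m (k + 1) hkm) _
    _ ≤ a m (k + 1) * (S * (a k n * K k)) :=
        mul_le_mul_of_nonneg_left (hg k hk) ((norm_nonneg _).trans (hD1 m (k + 1) hkm))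
    _ = S * (a m (k + 1) * (a k n * K k)) := by ring

theorem exists_norm_sub_le_mul_of_eq_calA_add_sum
    (ha : ∀ m n : ℕ, n ≤ m → 0 < a m n)
    (hD1 : ∀ m n : ℕ, n ≤ m → ‖(calA A m n).comp (P n)‖ ≤ a m n)
    {f : ℕ → X → X} {L : ℕ → ℝ} (hL0 : ∀ k, 0 ≤ L k)
    (hLip : ∀ (k : ℕ) (u v : X), ‖f k u - f k v‖ ≤ L k * ‖u - v‖) {n : ℕ} {α : ℝ}
    (hα : ∀ m, n ≤ m → ∑ k ∈ Ico n m, a m (k + 1) * (a k n * L k) ≤ α * a m n)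
    {w w' : X} (hw : P n w = w) (hw' : P n w' = w') {y y' z z' : ℕ → X}
    (hz : ∀ k, ‖z k - z' k‖ ≤ ‖y k - y' k‖)
    (hy : ∀ m, n ≤ m →
      y m = calA A m n w + ∑ k ∈ Ico n m, calA A m (k + 1) (P (k + 1) (f k (y k + z k))))
    (hy' : ∀ m, n ≤ m →
      y' m = calA A m n w' + ∑ k ∈ Ico n m, calA A m (k + 1) (P (k + 1) (f k (y' k + z' k))))
    (hyC : ∃ C, ∀ m, n ≤ m → ‖y m‖ ≤ C * a m n)
    (hyC' : ∃ C, ∀ m, n ≤ m → ‖y' m‖ ≤ C * a m n) :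
    ∃ S, 0 ≤ S ∧ S * (1 - 2 * α) ≤ ‖w - w'‖ ∧ ∀ m, n ≤ m → ‖y m - y' m‖ ≤ S * a m n := by
  obtain ⟨C, hC⟩ := hyC
  obtain ⟨C', hC'⟩ := hyC'
  refine exists_le_mul_of_le_add_mul (s := Set.Ici n) ⟨n, Set.self_mem_Ici⟩
    (fun _ _ => norm_nonneg _) (fun m hm => ha m n hm) ⟨C + C', fun m hm => ?_⟩
    fun S hS0 hS m hm => ?_
  · calc ‖y m - y' m‖ ≤ ‖y m‖ + ‖y' m‖ := norm_sub_le _ _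
      _ ≤ C * a m n + C' * a m n := add_le_add (hC m hm) (hC' m hm)
      _ = (C + C') * a m n := by ring
  · have hstep : ∀ k ∈ Ico n m, ‖f k (y k + z k) - f k (y' k + z' k)‖ ≤ 2 * S * (a k n * L k) :=
      fun k hk => calc
        _ ≤ 2 * L k * ‖y k - y' k‖ := norm_map_add_sub_map_add_le (hL0 k) (hLip k) (hz k)
        _ ≤ 2 * L k * (S * a k n) :=
            mul_le_mul_of_nonneg_left (hS k (mem_Ico.1 hk).1) (by linarith [hL0 k])
        _ = 2 * S * (a k n * L k) := by ring
    calc ‖y m - y' m‖ ≤ a m n * ‖w - w'‖ + 2 * S * ∑ k ∈ Ico n m, a m (k + 1) * (a k n * L k) := by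
          rw [hy m hm, hy' m hm]; exact norm_calA_sub_add_sum_sub_le hD1 hm hw hw' hstep
      _ ≤ a m n * ‖w - w'‖ + 2 * S * (α * a m n) := by gcongr; exact hα m hm
      _ = (‖w - w'‖ + 2 * α * S) * a m n := by ring

theorem norm_sub_le_of_hasSum_of_norm_sub_le_mul {B : ℕ → ℕ → X →L[ℝ] X} {b : ℕ → ℕ → ℝ}
    (hD2 : ∀ m n : ℕ, n ≤ m → ‖B m n‖ ≤ b m n)
    {f : ℕ → X → X} {L : ℕ → ℝ} (hL0 : ∀ k, 0 ≤ L k)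
    (hLip : ∀ (k : ℕ) (u v : X), ‖f k u - f k v‖ ≤ L k * ‖u - v‖) {n : ℕ}
    (hsum : Summable fun j : ℕ => b (n + j + 1) n * (a (n + j) n * L (n + j)))
    {y y' z z' : ℕ → X} (hz : ∀ k, ‖z k - z' k‖ ≤ ‖y k - y' k‖) {S : ℝ}
    (hS : ∀ m, n ≤ m → ‖y m - y' m‖ ≤ S * a m n) {s s' : X}
    (hs : HasSum (fun j => B (n + j + 1) n (f (n + j) (y (n + j) + z (n + j)))) s)
    (hs' : HasSum (fun j => B (n + j + 1) n (f (n + j) (y' (n + j) + z' (n + j)))) s') :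
    ‖s - s'‖ ≤ 2 * S * ∑' j, b (n + j + 1) n * (a (n + j) n * L (n + j)) := by
  refine (hs.sub hs').norm_le_of_bounded (hsum.hasSum.mul_left (2 * S)) fun j => ?_
  have hb : 0 ≤ b (n + j + 1) n := (norm_nonneg _).trans (hD2 _ _ (by omega))
  calc ‖B (n + j + 1) n (f (n + j) (y (n + j) + z (n + j))) -
        B (n + j + 1) n (f (n + j) (y' (n + j) + z' (n + j)))‖
      ≤ b (n + j + 1) n * ‖f (n + j) (y (n + j) + z (n + j)) -
          f (n + j) (y' (n + j) + z' (n + j))‖ := by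
        rw [← map_sub]; exact ContinuousLinearMap.le_of_opNorm_le _ (hD2 _ _ (by omega)) _
    _ ≤ b (n + j + 1) n * (2 * L (n + j) * (S * a (n + j) n)) := by
        gcongr
        exact (norm_map_add_sub_map_add_le (hL0 _) (hLip _) (hz _)).trans
          (mul_le_mul_of_nonneg_left (hS _ (by omega)) (by linarith [hL0 (n + j)]))
    _ = 2 * S * (b (n + j + 1) n * (a (n + j) n * L (n + j))) := by ring

end VariationOfConstants

theorem Phi_maps_X_into_X_general
    {X : Type*} [NormedAddCommGroup X] [NormedSpace ℝ X]
    (A P : ℕ → X →L[ℝ] X) (B : ℕ → ℕ → X →L[ℝ] X) (a b : ℕ → ℕ → ℝ)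
    -- the bounds are positive
    (ha : ∀ m n : ℕ, n ≤ m → 0 < a m n)
    -- the `P n` are bounded projections
    (hproj : ∀ n, (P n).comp (P n) = P n)
    -- (D1) : `‖𝒜_{m,n} P n‖ ≤ a m n`
    (hD1 : ∀ m n : ℕ, n ≤ m → ‖(calA A m n).comp (P n)‖ ≤ a m n)
    -- (D2) : `‖(𝒜_{m,n}|_{F n})⁻¹ Q m‖ ≤ b m n`
    (hD2 : ∀ m n : ℕ, n ≤ m → ‖B m n‖ ≤ b m n)
    -- the perturbations `f k` vanish at `0` and are Lipschitz with constant `L k`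
    (f : ℕ → X → X) (L : ℕ → ℝ) (hL0 : ∀ k, 0 ≤ L k) (hf0 : ∀ k, f k 0 = 0)
    (hLip : ∀ (k : ℕ) (u v : X), ‖f k u - f k v‖ ≤ L k * ‖u - v‖)
    -- `α = sup_{m>n} (1/a_{m,n}) ∑_{k=n}^{m-1} a_{m,k+1} a_{k,n} Lip(f k) < ∞`
    (α : ℝ)
    (hα : IsLUB {r : ℝ | ∃ m n : ℕ, n < m ∧
      r = (∑ k ∈ Finset.Ico n m, a m (k + 1) * (a k n * L k)) / a m n} α)
    -- `β = sup_n ∑_{k=n}^{∞} b_{k+1,n} a_{k,n} Lip(f k) < ∞`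
    (β : ℝ)
    (hsum : ∀ n : ℕ, Summable fun j : ℕ => b (n + j + 1) n * (a (n + j) n * L (n + j)))
    (hβ : IsLUB {r : ℝ | ∃ n : ℕ,
      r = ∑' j : ℕ, b (n + j + 1) n * (a (n + j) n * L (n + j))} β)
    -- `2α + max {2β, √β} < 1`
    (hcond : 2 * α + max (2 * β) (Real.sqrt β) < 1)
    (φ : ∀ n : ℕ, LinearMap.range (P n : X →ₗ[ℝ] X) → LinearMap.ker (P n : X →ₗ[ℝ] X))
    (hφ : ((∀ n, φ n 0 = 0) ∧
      ∀ (n : ℕ) (ξ ξ' : LinearMap.range (P n : X →ₗ[ℝ] X)),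
        ‖(φ n ξ : X) - (φ n ξ' : X)‖ ≤ ‖(ξ : X) - (ξ' : X)‖))
    (x : ∀ n m : ℕ, LinearMap.range (P n : X →ₗ[ℝ] X) → LinearMap.range (P m : X →ₗ[ℝ] X))
    (hx : ∀ n : ℕ, ((∀ m : ℕ, n ≤ m → x n m 0 = 0) ∧
      (∃ C : ℝ, ∀ m : ℕ, n ≤ m → ∀ ξ : LinearMap.range (P n : X →ₗ[ℝ] X),
        ‖(x n m ξ : X)‖ ≤ C * (a m n * ‖(ξ : X)‖)) ∧
      (∀ m : ℕ, n ≤ m → ∀ ξ : LinearMap.range (P n : X →ₗ[ℝ] X),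
        (x n m ξ : X) = calA A m n (ξ : X) +
          ∑ k ∈ Finset.Ico n m,
            calA A m (k + 1) (P (k + 1) (f k ((x n k ξ : X) + (φ k (x n k ξ) : X)))))))
    -- `ψ = Φ φ`
    (ψ : ∀ n : ℕ, LinearMap.range (P n : X →ₗ[ℝ] X) → LinearMap.ker (P n : X →ₗ[ℝ] X))
    (hΦ : ∀ (n : ℕ) (ξ : LinearMap.range (P n : X →ₗ[ℝ] X)),
      HasSum
        (fun j : ℕ => B (n + j + 1) n (f (n + j)
          ((x n (n + j) ξ : X) + (φ (n + j) (x n (n + j) ξ) : X))))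
        (-(ψ n ξ : X)))
    :
    (∀ n : ℕ, ψ n 0 = 0) ∧
    (∀ (n : ℕ) (ξ ξ' : LinearMap.range (P n : X →ₗ[ℝ] X)),
      ‖(ψ n ξ : X) - (ψ n ξ' : X)‖ ≤ 2 * β / (1 - 2 * α) * ‖(ξ : X) - (ξ' : X)‖) ∧
    (∀ (n : ℕ) (ξ ξ' : LinearMap.range (P n : X →ₗ[ℝ] X)),
      2 * β / (1 - 2 * α) * ‖(ξ : X) - (ξ' : X)‖ ≤ ‖(ξ : X) - (ξ' : X)‖) ∧
    ((∀ n, ψ n 0 = 0) ∧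
      ∀ (n : ℕ) (ξ ξ' : LinearMap.range (P n : X →ₗ[ℝ] X)),
        ‖(ψ n ξ : X) - (ψ n ξ' : X)‖ ≤ ‖(ξ : X) - (ξ' : X)‖) := by
  obtain ⟨hφ0, hφlip⟩ := hφ
  have hfix : ∀ n (ξ : LinearMap.range (P n : X →ₗ[ℝ] X)), P n ξ = ξ := fun n ξ =>
    (LinearMap.IsIdempotentElem.mem_range_iff
      (ContinuousLinearMap.IsIdempotentElem.toLinearMap (hproj n))).1 ξ.2
  have hβ0 : 0 ≤ β := (tsum_nonneg fun j => mul_nonneg ((norm_nonneg _).trans (hD2 _ _ (by omega)))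
    (mul_nonneg (ha _ _ (by omega)).le (hL0 _))).trans (hβ.1 ⟨0, rfl⟩)
  have hgap : 2 * α + 2 * β < 1 := (add_le_add_right (le_max_left _ _) _).trans_lt hcond
  have hψ0 : ∀ n, ψ n 0 = 0 := fun n => Subtype.ext <| neg_eq_zero.1 <|
    (hΦ n 0).unique (by simp [(hx n).1, hφ0, hf0])
  have hψlip : ∀ (n : ℕ) (ξ ξ' : LinearMap.range (P n : X →ₗ[ℝ] X)),
      ‖(ψ n ξ : X) - (ψ n ξ' : X)‖ ≤ 2 * β / (1 - 2 * α) * ‖(ξ : X) - (ξ' : X)‖ := by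
    intro n ξ ξ'
    obtain ⟨-, ⟨C, hC⟩, hrec⟩ := hx n
    have hz : ∀ k, ‖(φ k (x n k ξ) : X) - φ k (x n k ξ')‖ ≤ ‖(x n k ξ : X) - x n k ξ'‖ :=
      fun k => hφlip k _ _
    obtain ⟨S, hS0, hSd, hS⟩ := exists_norm_sub_le_mul_of_eq_calA_add_sum ha hD1 hL0 hLip
      (fun m hm => sum_le_mul_of_isLUB ha hL0 hα hm) (hfix n ξ) (hfix n ξ') hz
      (fun m hm => hrec m hm ξ) (fun m hm => hrec m hm ξ')
      ⟨C * ‖(ξ : X)‖, fun m hm => (hC m hm ξ).trans_eq (by ring)⟩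
      ⟨C * ‖(ξ' : X)‖, fun m hm => (hC m hm ξ').trans_eq (by ring)⟩
    calc ‖(ψ n ξ : X) - ψ n ξ'‖ = ‖-(ψ n ξ : X) - -(ψ n ξ' : X)‖ := by
          rw [neg_sub_neg, norm_sub_rev]
      _ ≤ 2 * S * ∑' j, b (n + j + 1) n * (a (n + j) n * L (n + j)) :=
          norm_sub_le_of_hasSum_of_norm_sub_le_mul hD2 hL0 hLip (hsum n) hz hS (hΦ n ξ) (hΦ n ξ')
      _ ≤ 2 * S * β := by gcongr; exact hβ.1 ⟨n, rfl⟩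
      _ ≤ 2 * β / (1 - 2 * α) * ‖(ξ : X) - ξ'‖ := by
          rw [div_mul_eq_mul_div, le_div_iff₀ (by linarith)]; nlinarith
  have hle : ∀ (n : ℕ) (ξ ξ' : LinearMap.range (P n : X →ₗ[ℝ] X)),
      2 * β / (1 - 2 * α) * ‖(ξ : X) - (ξ' : X)‖ ≤ ‖(ξ : X) - (ξ' : X)‖ := fun _ _ _ =>
    mul_le_of_le_one_left (norm_nonneg _) ((div_le_one (by linarith)).2 (by linarith))
  exact ⟨hψ0, hψlip, hle, hψ0, fun n ξ ξ' => (hψlip n ξ ξ').trans (hle n ξ ξ')⟩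

/-- The operator `Φ` maps `𝒳` into `𝒳`. -/
theorem Phi_maps_X_into_X
    {X : Type*} [NormedAddCommGroup X] [NormedSpace ℝ X] [CompleteSpace X]
    (A P : ℕ → X →L[ℝ] X) (B : ℕ → ℕ → X →L[ℝ] X) (a b : ℕ → ℕ → ℝ)
    -- the bounds are positive
    (ha : ∀ m n : ℕ, n ≤ m → 0 < a m n) (hb : ∀ m n : ℕ, n ≤ m → 0 < b m n)
    -- the `P n` are bounded projections
    (hproj : ∀ n, (P n).comp (P n) = P n)
    -- (S1) : `P m ∘ 𝒜_{m,n} = 𝒜_{m,n} ∘ P n`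
    (hS1 : ∀ m n : ℕ, n ≤ m → (P m).comp (calA A m n) = (calA A m n).comp (P n))
    -- (S2)/(S3) : `B m n` is the operator `(𝒜_{m,n}|_{F n})⁻¹ ∘ Q m`, where `Q m = Id - P m`;
    -- its existence encodes that `𝒜_{m,n}` maps `F n = ker (P n)` bijectively onto `F m`
    (hB1 : ∀ m n : ℕ, n ≤ m → ∀ x : X, calA A m n (B m n x) = x - P m x)
    (hB2 : ∀ m n : ℕ, n ≤ m → ∀ x : X, B m n (calA A m n x) = x - P n x)
    (hBF : ∀ m n : ℕ, n ≤ m → ∀ x : X, P n (B m n x) = 0)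
    -- (D1) : `‖𝒜_{m,n} P n‖ ≤ a m n`
    (hD1 : ∀ m n : ℕ, n ≤ m → ‖(calA A m n).comp (P n)‖ ≤ a m n)
    -- (D2) : `‖(𝒜_{m,n}|_{F n})⁻¹ Q m‖ ≤ b m n`
    (hD2 : ∀ m n : ℕ, n ≤ m → ‖B m n‖ ≤ b m n)
    -- the perturbations `f k` vanish at `0` and are Lipschitz with constant `L k`
    (f : ℕ → X → X) (L : ℕ → ℝ) (hL0 : ∀ k, 0 ≤ L k) (hf0 : ∀ k, f k 0 = 0)
    (hLip : ∀ (k : ℕ) (u v : X), ‖f k u - f k v‖ ≤ L k * ‖u - v‖)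
    -- `α = sup_{m>n} (1/a_{m,n}) ∑_{k=n}^{m-1} a_{m,k+1} a_{k,n} Lip(f k) < ∞`
    (α : ℝ)
    (hα : IsLUB {r : ℝ | ∃ m n : ℕ, n < m ∧
      r = (∑ k ∈ Finset.Ico n m, a m (k + 1) * (a k n * L k)) / a m n} α)
    -- `β = sup_n ∑_{k=n}^{∞} b_{k+1,n} a_{k,n} Lip(f k) < ∞`
    (β : ℝ)
    (hsum : ∀ n : ℕ, Summable fun j : ℕ => b (n + j + 1) n * (a (n + j) n * L (n + j)))
    (hβ : IsLUB {r : ℝ | ∃ n : ℕ,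
      r = ∑' j : ℕ, b (n + j + 1) n * (a (n + j) n * L (n + j))} β)
    -- `2α + max {2β, √β} < 1`
    (hcond : 2 * α + max (2 * β) (Real.sqrt β) < 1)
    (φ : ∀ n : ℕ, LinearMap.range (P n : X →ₗ[ℝ] X) → LinearMap.ker (P n : X →ₗ[ℝ] X))
    (hφ : ((∀ n, φ n 0 = 0) ∧
      ∀ (n : ℕ) (ξ ξ' : LinearMap.range (P n : X →ₗ[ℝ] X)),
        ‖(φ n ξ : X) - (φ n ξ' : X)‖ ≤ ‖(ξ : X) - (ξ' : X)‖))
    (x : ∀ n m : ℕ, LinearMap.range (P n : X →ₗ[ℝ] X) → LinearMap.range (P m : X →ₗ[ℝ] X))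
    (hx : ∀ n : ℕ, ((∀ m : ℕ, n ≤ m → x n m 0 = 0) ∧
      (∃ C : ℝ, ∀ m : ℕ, n ≤ m → ∀ ξ : LinearMap.range (P n : X →ₗ[ℝ] X),
        ‖(x n m ξ : X)‖ ≤ C * (a m n * ‖(ξ : X)‖)) ∧
      (∀ m : ℕ, n ≤ m → ∀ ξ : LinearMap.range (P n : X →ₗ[ℝ] X),
        (x n m ξ : X) = calA A m n (ξ : X) +
          ∑ k ∈ Finset.Ico n m,
            calA A m (k + 1) (P (k + 1) (f k ((x n k ξ : X) + (φ k (x n k ξ) : X)))))))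
    -- `ψ = Φ φ`
    (ψ : ∀ n : ℕ, LinearMap.range (P n : X →ₗ[ℝ] X) → LinearMap.ker (P n : X →ₗ[ℝ] X))
    (hΦ : ∀ (n : ℕ) (ξ : LinearMap.range (P n : X →ₗ[ℝ] X)),
      HasSum
        (fun j : ℕ => B (n + j + 1) n (f (n + j)
          ((x n (n + j) ξ : X) + (φ (n + j) (x n (n + j) ξ) : X))))
        (-(ψ n ξ : X)))
    :
    (∀ n : ℕ, ψ n 0 = 0) ∧
    (∀ (n : ℕ) (ξ ξ' : LinearMap.range (P n : X →ₗ[ℝ] X)),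
      ‖(ψ n ξ : X) - (ψ n ξ' : X)‖ ≤ 2 * β / (1 - 2 * α) * ‖(ξ : X) - (ξ' : X)‖) ∧
    (∀ (n : ℕ) (ξ ξ' : LinearMap.range (P n : X →ₗ[ℝ] X)),
      2 * β / (1 - 2 * α) * ‖(ξ : X) - (ξ' : X)‖ ≤ ‖(ξ : X) - (ξ' : X)‖) ∧
    ((∀ n, ψ n 0 = 0) ∧
      ∀ (n : ℕ) (ξ ξ' : LinearMap.range (P n : X →ₗ[ℝ] X)),
        ‖(ψ n ξ : X) - (ψ n ξ' : X)‖ ≤ ‖(ξ : X) - (ξ' : X)‖) :=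
  Phi_maps_X_into_X_general A P B a b ha hproj hD1 hD2 f L hL0 hf0 hLip α hα β hsum hβ hcond φ hφ x
    hx ψ hΦ
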